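/- arXiv:1708.03673 — 4 statements merged into one kernel-verified Lean document; each statement's English description precedes it below -/
import Mathlib

section
/- Let k ≥ 1, let w ∈ G_k be a good involution, let x = t s_1 s_2 ⋯ s_k ∈ B_{k+1}, and for 1 ≤ i ≤ k let x_i = t s_1 ⋯ ŝ_i ⋯ s_k (the product with s_i omitted). Then: (i) xwx⁻¹ ∈ G_{k+1} and xwx⁻¹(1) = 1; (ii) xwx⁻¹t ∈ G_{k+1} and (xwx⁻¹t)(1) = −1; (iii) for 1 ≤ i ≤ k, xw x_i⁻¹ ∈ G_{k+1} if and only if w(i) = i, and in that case (xw x_i⁻¹)(1) = −(i+1). -/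
/-!
Conjugation by `x = t s₁ ⋯ s_k` sends `j ↦ j + 1` for `1 ≤ j ≤ k` and `k + 1 ↦ -1`, so it
carries `1, …, k` to positive points and `x w x⁻¹` is a good involution fixing `±1`, hence
commuting with `t`. For (iii), `x xᵢ⁻¹` is the conjugate of `sᵢ` by
`t s₁ ⋯ s_{i-1}`, the reflection `r` exchanging `-1 ↔ i + 1` and `1 ↔ -(i + 1)`. Hence
`x w xᵢ⁻¹ = (x w x⁻¹) r` sends `1` to `-(x w x⁻¹)(i + 1)`, which rules out goodness unless
`x w x⁻¹` fixes `i + 1`, i.e. `w i = i`; and in that case `x w x⁻¹` commutes with `r`.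
-/

namespace PaperB

open scoped Classical

def B (n : ℕ) : Subgroup (Equiv.Perm ℤ) where
  carrier := {w | (∀ i : ℤ, w (-i) = - w i) ∧ ∀ i : ℤ, (n : ℤ) < |i| → w i = i}
  one_mem' := ⟨fun _ => rfl, fun _ _ => rfl⟩
  mul_mem' := by
    rintro a b ⟨ha1, ha2⟩ ⟨hb1, hb2⟩
    refine ⟨fun i => ?_, fun i hi => ?_⟩
    · rw [Equiv.Perm.mul_apply, Equiv.Perm.mul_apply, hb1, ha1]
    · rw [Equiv.Perm.mul_apply, hb2 i hi, ha2 i hi]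
  inv_mem' := by
    rintro a ⟨ha1, ha2⟩
    refine ⟨fun i => a.injective ?_, fun i hi => a.injective ?_⟩
    · rw [← Equiv.Perm.mul_apply, mul_inv_cancel, Equiv.Perm.one_apply, ha1, ← Equiv.Perm.mul_apply, mul_inv_cancel, Equiv.Perm.one_apply]
    · rw [← Equiv.Perm.mul_apply, mul_inv_cancel, Equiv.Perm.one_apply, ha2 i hi]

def t : Equiv.Perm ℤ := Equiv.swap (-1) 1

def s (i : ℕ) : Equiv.Perm ℤ :=
  Equiv.swap (i : ℤ) ((i : ℤ) + 1) * Equiv.swap (-(i : ℤ)) (-((i : ℤ) + 1))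

def gens (n : ℕ) : Set (Equiv.Perm ℤ) := insert t (s '' Set.Ico 1 n)

noncomputable def len (n : ℕ) (w : Equiv.Perm ℤ) : ℕ :=
  sInf {l | ∃ L : List (Equiv.Perm ℤ), (∀ g ∈ L, g ∈ gens n) ∧ L.prod = w ∧ L.length = l}

/-- A model of the Iwahori–Hecke algebra `H_{p,q}(Bₘ)`:  a `ℂ`-algebra `H` together with a
family `T w`, `w ∈ Bₘ`, which is linearly independent, satisfies `T 1 = 1`, and satisfies the
standard multiplication rule
`T w * T g = T (w g)` if `ℓ(w g) > ℓ(w)` and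
`T w * T g = par(g) T (w g) + (1 - par(g)) T w` otherwise,
where `par t = p` and `par sᵢ = q`. -/
structure HeckeModel (m : ℕ) (p q : ℂ) (H : Type) [Ring H] [Algebra ℂ H] where
  T : Equiv.Perm ℤ → H
  T_one : T 1 = 1
  T_mul : ∀ w ∈ B m, ∀ g ∈ gens m,
    T w * T g =
      if len m w < len m (w * g) then T (w * g)
      else (if g = t then p else q) • T (w * g) + (1 - if g = t then p else q) • T w
  free : LinearIndependent ℂ (fun w : {x // x ∈ B m} => T w.1)

/-- The element `-w`, given by `(-w)(i) = -(w i)`. -/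
def negOf (w : Equiv.Perm ℤ) : Equiv.Perm ℤ := (Equiv.neg ℤ : Equiv.Perm ℤ) * w

/-- A good involution in `B_k`. -/
def Good (k : ℕ) (w : Equiv.Perm ℤ) : Prop :=
  w ∈ B k ∧ w * w = 1 ∧ ∀ i : ℤ, 1 ≤ i → i ≤ (k : ℤ) → (w i = i ∨ w i < 0)

/-- `a(w)`: the number of `1 ≤ j ≤ m` with `w j = j`. -/
noncomputable def aFix (m : ℕ) (w : Equiv.Perm ℤ) : ℕ :=
  ((Finset.Icc (1 : ℤ) (m : ℤ)).filter fun j => w j = j).card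

/-- `d(i, w)`: the number of `i < j ≤ m` with `w j = j`. -/
noncomputable def dFix (m : ℕ) (i : ℤ) (w : Equiv.Perm ℤ) : ℕ :=
  ((Finset.Ioc i (m : ℤ)).filter fun j => w j = j).card

/-- `c(w)`: the number of `w`-tidy pairs `{i, j}`, i.e. pairs of distinct indices
`1 ≤ i, j ≤ m` with `-w i < j` and `-w j < i`. -/
noncomputable def cTidy (m : ℕ) (w : Equiv.Perm ℤ) : ℕ :=
  (((Finset.Icc (1 : ℤ) (m : ℤ)) ×ˢ (Finset.Icc (1 : ℤ) (m : ℤ))).filter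
    fun pr => pr.1 < pr.2 ∧ -w pr.1 < pr.2 ∧ -w pr.2 < pr.1).card

/-- `x = t s₁ s₂ ⋯ s_k ∈ B_{k+1}`. -/
def xE (k : ℕ) : Equiv.Perm ℤ := (t :: ((List.range k).map fun j => s (j + 1))).prod

/-- `xᵢ = t s₁ ⋯ ŝᵢ ⋯ s_k ∈ B_{k+1}` (the product with `sᵢ` omitted). -/
def xI (k i : ℕ) : Equiv.Perm ℤ :=
  (t :: ((((List.range k).map fun j => j + 1).filter fun j => j ≠ i).map s)).prod


/-- The parabolic subgroup `S_k ⊆ B_k` generated by `s₁, …, s_{k-1}`. -/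
def Spar (k : ℕ) : Subgroup (Equiv.Perm ℤ) := Subgroup.closure (s '' Set.Ico 1 k)

/-- `c(-w)` for `w ∈ S_k`: the number of neat pairs of `w`, i.e. pairs `{i,j}` of distinct
indices `1 ≤ i, j ≤ k` with `w i < j` and `w j < i`. -/
noncomputable def cNeat (k : ℕ) (w : Equiv.Perm ℤ) : ℕ :=
  (((Finset.Icc (1 : ℤ) (k : ℤ)) ×ˢ (Finset.Icc (1 : ℤ) (k : ℤ))).filter
    fun pr => pr.1 < pr.2 ∧ w pr.1 < pr.2 ∧ w pr.2 < pr.1).card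

/-- The set `X_{0,k}` of distinguished (minimal length) right coset representatives of
`S_k` in `B_k`. -/
def X0 (k : ℕ) : Set (Equiv.Perm ℤ) :=
  {x | x ∈ B k ∧ ∀ u ∈ Spar k, len k x ≤ len k (u * x)}

/-- `Succ(w)` for a good involution `w ∈ G_k`. -/
def Succ (k : ℕ) (w : Equiv.Perm ℤ) : Set (Equiv.Perm ℤ) :=
  {xE k * w * (xE k)⁻¹, xE k * w * (xE k)⁻¹ * t} ∪
    {y | ∃ i : ℕ, 1 ≤ i ∧ i ≤ k ∧ w (i : ℤ) = (i : ℤ) ∧ y = xE k * w * (xI k i)⁻¹}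

/-- The element `c = s_{n+1} s_{n+2} ⋯ s_{n+k} ∈ B_{n+k+1}`. -/
def cElt (n k : ℕ) : Equiv.Perm ℤ := ((List.range k).map fun j => s (n + 1 + j)).prod

/-- The palindromic product `s_{n+k} s_{n+k-1} ⋯ s_{n+i} ⋯ s_{n+k-1} s_{n+k}`. -/
def pal (n k i : ℕ) : Equiv.Perm ℤ :=
  (((List.range (k - i)).map fun j => s (n + k - j)) ++ [s (n + i)] ++
    ((List.range (k - i)).map fun j => s (n + i + 1 + j))).prod

/-- The parabolic subgroup `B_n × S_k` of `B_{n+k}`, generated by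
`{t, s₁, …, s_{n-1}} ∪ {s_{n+1}, …, s_{n+k-1}}` (with `t` omitted when `n = 0`). -/
def P (n k : ℕ) : Subgroup (Equiv.Perm ℤ) :=
  Subgroup.closure
    ((if n = 0 then (∅ : Set (Equiv.Perm ℤ)) else {t}) ∪ s '' Set.Ico 1 n ∪
      s '' Set.Ico (n + 1) (n + k))

/-- The factor `S_k` of `B_n × S_k`, generated by `s_{n+1}, …, s_{n+k-1}`. -/
def SparF (n k : ℕ) : Subgroup (Equiv.Perm ℤ) := Subgroup.closure (s '' Set.Ico (n + 1) (n + k))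

/-- The set `X_{n,k}` of distinguished (minimal length) right coset representatives of
`B_n × S_k` in `B_{n+k}`. -/
def Xnk (n k : ℕ) : Set (Equiv.Perm ℤ) :=
  {x | x ∈ B (n + k) ∧ ∀ u ∈ P n k, len (n + k) x ≤ len (n + k) (u * x)}

/-- The strict Bruhat order on `B_m`: `x < w` iff `x ≠ w` and some reduced expression of `w`
has a subword whose product is `x`. -/
def bruhatLT (m : ℕ) (x w : Equiv.Perm ℤ) : Prop :=
  x ≠ w ∧ ∃ L : List (Equiv.Perm ℤ), (∀ g ∈ L, g ∈ gens m) ∧ L.prod = w ∧ L.length = len m w ∧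
    ∃ L' : List (Equiv.Perm ℤ), L'.Sublist L ∧ L'.prod = x

open Equiv

lemma mem_B_iff {n : ℕ} {w : Perm ℤ} :
    w ∈ B n ↔ (∀ i : ℤ, w (-i) = -w i) ∧ ∀ i : ℤ, (n : ℤ) < |i| → w i = i := Iff.rfl

section B

variable {n m : ℕ} {w : Perm ℤ}

lemma apply_neg_of_mem_B (hw : w ∈ B n) (i : ℤ) : w (-i) = -w i := (mem_B_iff.mp hw).1 i

lemma apply_eq_of_mem_B (hw : w ∈ B n) {i : ℤ} (hi : (n : ℤ) < |i|) : w i = i :=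
  (mem_B_iff.mp hw).2 i hi

lemma abs_le_of_mem_B (hw : w ∈ B n) {a : ℤ} (ha : w a ≠ a) : |a| ≤ n := by
  by_contra h
  exact ha (apply_eq_of_mem_B hw (not_le.mp h))

lemma abs_apply_le_of_mem_B (hw : w ∈ B n) {a : ℤ} (ha : w a ≠ a) : |w a| ≤ n := by
  by_contra h
  exact ha (w.injective (apply_eq_of_mem_B hw (not_le.mp h)))

lemma B_mono (h : n ≤ m) : B n ≤ B m := fun _ hw =>
  mem_B_iff.mpr ⟨apply_neg_of_mem_B hw, fun _ hi =>
    apply_eq_of_mem_B hw (lt_of_le_of_lt (by exact_mod_cast h) hi)⟩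

end B

lemma t_apply_one : t 1 = -1 := swap_apply_right _ _

lemma t_mul_t : t * t = 1 := swap_mul_self _ _

lemma t_mem_B : t ∈ B 1 := by
  refine mem_B_iff.mpr ⟨fun j => ?_, fun j hj => ?_⟩
  · simp only [t, swap_apply_def]
    split_ifs <;> omega
  · rcases lt_abs.mp hj with hj | hj <;> simp only [t, swap_apply_def] <;> split_ifs <;> omega

def signedSwap (a b : ℤ) : Perm ℤ := swap a b * swap (-a) (-b)

section signedSwap

variable {a b : ℤ}

lemma signedSwap_mem_B {m : ℕ} (ha0 : a ≠ 0) (hb0 : b ≠ 0) (ha : |a| ≤ m) (hb : |b| ≤ m) :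
    signedSwap a b ∈ B m := by
  rw [abs_le] at ha hb
  refine mem_B_iff.mpr ⟨fun j => ?_, fun j hj => ?_⟩
  · simp only [signedSwap, Perm.mul_apply, swap_apply_def]
    split_ifs <;> omega
  · rcases lt_abs.mp hj with hj | hj <;>
      simp only [signedSwap, Perm.mul_apply, swap_apply_def] <;> split_ifs <;> omega

lemma signedSwap_mul_self (ha0 : a ≠ 0) (hb0 : b ≠ 0) : signedSwap a b * signedSwap a b = 1 := by
  ext j
  simp only [signedSwap, Perm.mul_apply, swap_apply_def, Perm.one_apply]
  split_ifs <;> omega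

lemma conj_signedSwap {m : ℕ} {y : Perm ℤ} (hy : y ∈ B m) :
    y * signedSwap a b * y⁻¹ = signedSwap (y a) (y b) := by
  rw [signedSwap, signedSwap, ← apply_neg_of_mem_B hy, ← apply_neg_of_mem_B hy, swap_apply_apply,
    swap_apply_apply]
  group

end signedSwap

lemma s_mem_B {i : ℕ} (hi : 1 ≤ i) : s i ∈ B (i + 1) :=
  signedSwap_mem_B (by omega) (by omega) (by rw [abs_le]; push_cast; omega)
    (by rw [abs_le]; push_cast; omega)

lemma s_apply_of_pos (i : ℕ) {a : ℤ} (ha : 1 ≤ a) :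
    s i a = if a = i then (i : ℤ) + 1 else if a = (i : ℤ) + 1 then (i : ℤ) else a := by
  simp only [s, Perm.mul_apply, swap_apply_def]
  split_ifs <;> omega

lemma xE_zero : xE 0 = t := by simp [xE]

lemma xE_succ (k : ℕ) : xE (k + 1) = xE k * s (k + 1) := by
  simp [xE, List.range_succ, List.prod_append, mul_assoc]

lemma xE_mem_B (k : ℕ) : xE k ∈ B (k + 1) := by
  induction k with
  | zero => rw [xE_zero]; exact t_mem_B
  | succ k ih => rw [xE_succ]; exact mul_mem (B_mono (by omega) ih) (s_mem_B (by omega))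

lemma xE_apply_of_pos (k : ℕ) {a : ℤ} (h1 : 1 ≤ a) (h2 : a ≤ k + 1) :
    xE k a = if a = k + 1 then -1 else a + 1 := by
  induction k generalizing a with
  | zero => rw [xE_zero, if_pos (by omega), show a = 1 by omega, t_apply_one]
  | succ k ih =>
    rw [xE_succ, Perm.mul_apply, s_apply_of_pos _ h1]
    push_cast at h2 ⊢
    obtain h | rfl | rfl : a ≤ k ∨ a = k + 1 ∨ a = k + 2 := by omega
    · rw [if_neg (by omega), if_neg (by omega), ih h1 (by omega), if_neg (by omega),
        if_neg (by omega)]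
    · rw [if_pos rfl, if_neg (by omega), apply_eq_of_mem_B (xE_mem_B k)]
      rw [lt_abs]; push_cast; omega
    · rw [if_neg (by omega), if_pos (by ring), ih (by omega) le_rfl, if_pos rfl, if_pos (by ring)]

lemma xE_apply_of_le {k : ℕ} {a : ℤ} (h1 : 1 ≤ a) (h2 : a ≤ k) : xE k a = a + 1 := by
  rw [xE_apply_of_pos k h1 (by omega), if_neg (by omega)]

lemma xE_apply_top (k : ℕ) : xE k (k + 1) = -1 := by
  rw [xE_apply_of_pos k (by omega) le_rfl, if_pos rfl]

lemma xE_conj_apply_one {k : ℕ} {w : Perm ℤ} (hw : w ∈ B k) : (xE k * w * (xE k)⁻¹) 1 = 1 := by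
  have hx : xE k (-(k + 1)) = 1 := by rw [apply_neg_of_mem_B (xE_mem_B k), xE_apply_top, neg_neg]
  have hw_top : w (-(k + 1)) = -(k + 1) := apply_eq_of_mem_B hw (by rw [lt_abs]; omega)
  rw [Perm.mul_apply, Perm.mul_apply, Perm.inv_eq_iff_eq.mpr hx.symm, hw_top, hx]

lemma xI_succ {k i : ℕ} (h : i ≤ k) : xI (k + 1) i = xI k i * s (k + 1) := by
  simp [xI, List.range_succ, List.filter_append, List.prod_append, mul_assoc,
    show k + 1 ≠ i by omega]

lemma xI_self (n : ℕ) : xI (n + 1) (n + 1) = xE n := by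
  have hfilter : ((List.range n).map fun j => j + 1).filter (fun j => j ≠ n + 1) =
      (List.range n).map fun j => j + 1 :=
    List.filter_eq_self.mpr fun a ha => by
      obtain ⟨b, hb, rfl⟩ := List.mem_map.mp ha
      simpa using (List.mem_range.mp hb).ne
  simp only [xI, xE, List.range_succ, List.map_append, List.filter_append, hfilter]
  simp [Function.comp_def]

lemma xE_mul_inv_xI {k i : ℕ} (hi : 1 ≤ i) (hik : i ≤ k) :
    xE k * (xI k i)⁻¹ = signedSwap (-1) (i + 1) := by
  induction k, hik using Nat.le_induction with
  | base =>
    obtain ⟨n, rfl⟩ : ∃ n, i = n + 1 := ⟨i - 1, by omega⟩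
    rw [xI_self, xE_succ, s, ← signedSwap, conj_signedSwap (xE_mem_B n)]
    push_cast
    rw [xE_apply_top, apply_eq_of_mem_B (xE_mem_B n) (by rw [lt_abs]; push_cast; omega)]
  | succ k hk ih => rw [xE_succ, xI_succ hk, mul_inv_rev, ← ih]; group

lemma mul_signedSwap_apply_one {m : ℕ} {u : Perm ℤ} (hu : u ∈ B m) {c : ℤ} (hc : 2 ≤ c) :
    (u * signedSwap (-1) c) 1 = -u c := by
  rw [Perm.mul_apply, ← apply_neg_of_mem_B hu]
  congr 1
  simp only [signedSwap, Perm.mul_apply, swap_apply_def]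
  split_ifs <;> omega

namespace Good

variable {k m : ℕ} {u w : Perm ℤ}

lemma conj {y : Perm ℤ} (hw : Good k w) (hy : y ∈ B m) (hkm : k ≤ m)
    (hpos : ∀ a : ℤ, 1 ≤ a → a ≤ k → 0 < y a) : Good m (y * w * y⁻¹) := by
  obtain ⟨hwB, hww, hwgood⟩ := hw
  refine ⟨mul_mem (mul_mem hy (B_mono hkm hwB)) (inv_mem hy), ?_, fun j hj1 _ => ?_⟩
  · rw [show y * w * y⁻¹ * (y * w * y⁻¹) = y * (w * w) * y⁻¹ by group, hww, mul_one,
      mul_inv_cancel]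
  obtain ⟨a, rfl⟩ := y.surjective j
  rw [Perm.mul_apply, Perm.mul_apply, Perm.inv_eq_iff_eq.mpr rfl]
  by_cases hfix : w a = a
  · exact Or.inl (by rw [hfix])
  right
  have ha := abs_le_of_mem_B hwB hfix
  have hwa := abs_apply_le_of_mem_B hwB hfix
  rw [abs_le] at ha hwa
  rcases lt_trichotomy a 0 with ha_neg | rfl | ha_pos
  · have := hpos (-a) (by omega) (by omega)
    rw [apply_neg_of_mem_B hy] at this
    omega
  · have := apply_neg_of_mem_B hwB 0
    rw [neg_zero] at this
    omega
  · have hwneg := (hwgood a ha_pos ha.2).resolve_left hfix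
    have := hpos (-w a) (by omega) (by omega)
    rw [apply_neg_of_mem_B hy] at this
    omega

lemma mul_t (hu : Good m u) (hm : 1 ≤ m) (h1 : u 1 = 1) : Good m (u * t) := by
  obtain ⟨huB, huu, hugood⟩ := hu
  have hneg1 : u (-1) = -1 := by rw [apply_neg_of_mem_B huB, h1]
  have hcomm : Commute u t := by
    have hconj := swap_apply_apply u (-1) 1
    rw [hneg1, h1] at hconj
    exact mul_inv_eq_iff_eq_mul.mp hconj.symm
  refine ⟨mul_mem huB (B_mono hm t_mem_B), ?_, fun j hj1 hjm => ?_⟩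
  · rw [hcomm.symm.mul_mul_mul_comm u t, huu, t_mul_t, one_mul]
  rcases eq_or_lt_of_le hj1 with rfl | hj
  · right; rw [Perm.mul_apply, t_apply_one, hneg1]; norm_num
  · rw [Perm.mul_apply, t, swap_apply_of_ne_of_ne (by omega) (by omega)]
    exact hugood j hj1 hjm

lemma mul_signedSwap_iff (hu : Good m u) (h1 : u 1 = 1) {c : ℤ} (hc : 2 ≤ c) (hcm : c ≤ m) :
    Good m (u * signedSwap (-1) c) ↔ u c = c := by
  obtain ⟨huB, huu, hugood⟩ := hu
  constructor
  · rintro ⟨-, -, hgood⟩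
    rcases hgood 1 le_rfl (by omega) with h | h <;> rw [mul_signedSwap_apply_one huB hc] at h
    · have : u c = u (-1) := by rw [apply_neg_of_mem_B huB, h1]; omega
      exact absurd (u.injective this) (by omega)
    · exact (hugood c (by omega) hcm).resolve_right (by omega)
  · intro hcc
    have hcomm : u * signedSwap (-1) c = signedSwap (-1) c * u := by
      rw [← mul_inv_eq_iff_eq_mul, conj_signedSwap huB, apply_neg_of_mem_B huB, h1, hcc]
    refine ⟨mul_mem huB (signedSwap_mem_B (by norm_num) (by omega) (by simp; omega)
      (by rw [abs_of_pos (by omega)]; exact hcm)), ?_, fun j hj1 hjm => ?_⟩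
    · rw [mul_assoc, ← mul_assoc _ u, ← hcomm, mul_assoc, ← mul_assoc u,
        signedSwap_mul_self (by norm_num) (by omega), huu, one_mul]
    have happly :
        (u * signedSwap (-1) c) j = u (if j = 1 then -c else if j = c then -1 else j) := by
      simp only [Perm.mul_apply, signedSwap, swap_apply_def]
      congr 1
      split_ifs <;> omega
    rw [happly]
    split_ifs with h h'
    · right; rw [apply_neg_of_mem_B huB, hcc]; omega
    · right; rw [apply_neg_of_mem_B huB, h1]; norm_num
    · exact hugood j hj1 hjm

end Good

theorem succ_good_general (k : ℕ) (w : Equiv.Perm ℤ) (hw : Good k w) :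
    (Good (k + 1) (xE k * w * (xE k)⁻¹) ∧ (xE k * w * (xE k)⁻¹) 1 = 1) ∧
    (Good (k + 1) (xE k * w * (xE k)⁻¹ * t) ∧ (xE k * w * (xE k)⁻¹ * t) 1 = -1) ∧
    (∀ i : ℕ, 1 ≤ i → i ≤ k →
      (Good (k + 1) (xE k * w * (xI k i)⁻¹) ↔ w (i : ℤ) = (i : ℤ)) ∧
      (w (i : ℤ) = (i : ℤ) → (xE k * w * (xI k i)⁻¹) 1 = -((i : ℤ) + 1))) := by
  set u := xE k * w * (xE k)⁻¹
  have hu : Good (k + 1) u :=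
    hw.conj (xE_mem_B k) k.le_succ fun a h1 h2 => by rw [xE_apply_of_le h1 h2]; omega
  have hu1 : u 1 = 1 := xE_conj_apply_one hw.1
  refine ⟨⟨hu, hu1⟩, ⟨hu.mul_t (by omega) hu1, ?_⟩, fun i hi hik => ?_⟩
  · rw [Perm.mul_apply, t_apply_one, apply_neg_of_mem_B hu.1, hu1]
  have hxi : xE k i = i + 1 := xE_apply_of_le (by omega) (by omega)
  have hui : u (i + 1) = xE k (w i) := by
    simp only [u, Perm.mul_apply, Perm.inv_eq_iff_eq.mpr hxi.symm]
  have hsplit : xE k * w * (xI k i)⁻¹ = u * signedSwap (-1) (i + 1) := by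
    rw [← xE_mul_inv_xI hi hik]
    simp only [u]
    group
  rw [hsplit, hu.mul_signedSwap_iff hu1 (by omega) (by push_cast; omega),
    mul_signedSwap_apply_one hu.1 (by omega), hui, ← hxi, (xE k).injective.eq_iff]
  exact ⟨Iff.rfl, fun h => by rw [h]⟩

theorem succ_good (k : ℕ) (hk : 1 ≤ k) (w : Equiv.Perm ℤ) (hw : Good k w) :
    (Good (k + 1) (xE k * w * (xE k)⁻¹) ∧ (xE k * w * (xE k)⁻¹) 1 = 1) ∧
    (Good (k + 1) (xE k * w * (xE k)⁻¹ * t) ∧ (xE k * w * (xE k)⁻¹ * t) 1 = -1) ∧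
    (∀ i : ℕ, 1 ≤ i → i ≤ k →
      (Good (k + 1) (xE k * w * (xI k i)⁻¹) ↔ w (i : ℤ) = (i : ℤ)) ∧
      (w (i : ℤ) = (i : ℤ) → (xE k * w * (xI k i)⁻¹) 1 = -((i : ℤ) + 1))) :=
  succ_good_general k w hw

end PaperB
end

section
/- The polynomials f_k satisfy f_1(p,q) = 1 − p, f_2(p,q) = 1 − (1+q)p + p², and for every k ≥ 3 the recurrence f_k = p(1 − q^{k−1}) f_{k−2} + (1−p) f_{k−1}. -/
/-!
Split the involutions `w` of `Fin (n + 2)` according to what they do with the last point.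
If `w` fixes it, deleting it leaves an arbitrary involution of `Fin (n + 1)` with one fixed point
fewer and the same neat pairs; these `w` contribute `(1 - p) f_{n+1}`. Otherwise `w` swaps it with
some `j ≤ n`; deleting both points leaves an arbitrary involution `v` of `Fin n` with the same fixed
points and one 2-cycle fewer, and the neat pairs of `w` are those of `v` together with the `n - j`
pairs `{x, last}` with `x > j`. As `(1 - q) ∑_{j ≤ n} q^(n-j) = 1 - q^(n+1)`, these `w` contribute
`p (1 - q^(n+1)) f_n`.
-/

namespace PaperF

open scoped Classical

/-- The number of fixed points `a(w)` of a permutation of `{1, …, k}`. -/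
def fixCount {k : ℕ} (w : Equiv.Perm (Fin k)) : ℕ :=
  (Finset.univ.filter fun i => w i = i).card

/-- The number `c(-w)` of neat pairs of `w`: pairs `{i, j}` of distinct indices with
`w i < j` and `w j < i`. -/
def neatCount {k : ℕ} (w : Equiv.Perm (Fin k)) : ℕ :=
  ((Finset.univ ×ˢ Finset.univ).filter
    fun pr : Fin k × Fin k => pr.1 < pr.2 ∧ w pr.1 < pr.2 ∧ w pr.2 < pr.1).card

/-- `f_k(p, q) = Σ_{w ∈ S_k, w² = 1} (p(1-q))^{(k - a(w))/2} (1-p)^{a(w)} q^{c(-w)}`,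
the sum being over the involutions in the symmetric group on `{1, …, k}`. -/
noncomputable def f (k : ℕ) (p q : ℂ) : ℂ :=
  ∑ w ∈ Finset.univ.filter (fun w : Equiv.Perm (Fin k) => w * w = 1),
    (p * (1 - q)) ^ ((k - fixCount w) / 2) * (1 - p) ^ fixCount w * q ^ neatCount w

open Equiv Finset

lemma perm_mul_self_eq_one_iff {α : Type*} {w : Perm α} : w * w = 1 ↔ ∀ x, w (w x) = x := by
  simp [Perm.ext_iff]

lemma optionCongr_removeNone_of_apply_none {α : Type*} [DecidableEq α] {σ : Perm (Option α)}
    (h : σ none = none) : optionCongr (removeNone σ) = σ := by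
  rw [map_equiv_removeNone, h, swap_self, ← Perm.one_def, one_mul]

lemma optionCongr_optionCongr_removeNone_removeNone {α : Type*} [DecidableEq α]
    {τ : Perm (Option (Option α))} (h₀ : τ none = none) (h₁ : τ (some none) = some none) :
    optionCongr (optionCongr (removeNone (removeNone τ))) = τ := by
  have h₁' : removeNone τ none = none :=
    Option.some_injective _ (by rw [removeNone_some τ ⟨none, h₁⟩, h₁])
  rw [optionCongr_removeNone_of_apply_none h₁', optionCongr_removeNone_of_apply_none h₀]

lemma one_sub_mul_sum_pow_sub {R : Type*} [CommRing R] (q : R) (n : ℕ) :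
    (1 - q) * ∑ j : Fin (n + 1), q ^ (n - j) = 1 - q ^ (n + 1) := by
  rw [← mul_neg_geom_sum, ← Fin.sum_univ_eq_sum_range (q ^ ·)]
  congr 1
  exact Fintype.sum_equiv Fin.revPerm _ _ fun j => by simp [Fin.val_rev]

def involutions (k : ℕ) : Finset (Perm (Fin k)) := univ.filter fun w => w * w = 1

def weight (p q : ℂ) {k : ℕ} (w : Perm (Fin k)) : ℂ :=
  (p * (1 - q)) ^ ((k - fixCount w) / 2) * (1 - p) ^ fixCount w * q ^ neatCount w

@[simp] lemma mem_involutions {k : ℕ} {w : Perm (Fin k)} : w ∈ involutions k ↔ w * w = 1 := by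
  simp [involutions]

lemma f_eq_sum_weight (k : ℕ) (p q : ℂ) : f k p q = ∑ w ∈ involutions k, weight p q w := rfl

lemma fixCount_eq_sum {k : ℕ} (w : Perm (Fin k)) :
    fixCount w = ∑ x, if w x = x then 1 else 0 := by
  rw [fixCount, card_filter]

lemma neatCount_eq_sum {k : ℕ} (w : Perm (Fin k)) :
    neatCount w = ∑ x, ∑ y, if x < y ∧ w x < y ∧ w y < x then 1 else 0 := by
  rw [neatCount, card_filter, sum_product]

lemma fixCount_le {k : ℕ} (w : Perm (Fin k)) : fixCount w ≤ k :=
  (card_filter_le _ _).trans (card_fin k).le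

lemma involutions_eq_singleton_of_le_one {k : ℕ} (hk : k ≤ 1) : involutions k = {1} := by
  have : Subsingleton (Fin k) := Fin.subsingleton_iff_le_one.2 hk
  exact filter_true_of_mem (fun w _ => Subsingleton.elim _ _) |>.trans univ_unique

lemma f_zero (p q : ℂ) : f 0 p q = 1 := by
  rw [f_eq_sum_weight, involutions_eq_singleton_of_le_one zero_le_one, sum_singleton]
  simp [weight, fixCount, neatCount]

lemma f_one (p q : ℂ) : f 1 p q = 1 - p := by
  rw [f_eq_sum_weight, involutions_eq_singleton_of_le_one le_rfl, sum_singleton]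
  simp [weight, fixCount, neatCount, filter_singleton]

section

variable {n : ℕ}

def fixLast (w : Perm (Fin (n + 1))) : Perm (Fin (n + 2)) :=
  finSuccEquivLast.symm.permCongr (optionCongr w)

def restrictLast (w : Perm (Fin (n + 2))) : Perm (Fin (n + 1)) :=
  removeNone (finSuccEquivLast.permCongr w)

@[simp] lemma fixLast_apply_last (w : Perm (Fin (n + 1))) :
    fixLast w (Fin.last (n + 1)) = Fin.last (n + 1) := by
  simp [fixLast]

@[simp] lemma fixLast_apply_castSucc (w : Perm (Fin (n + 1))) (i : Fin (n + 1)) :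
    fixLast w i.castSucc = (w i).castSucc := by
  simp [fixLast]

lemma restrictLast_fixLast (w : Perm (Fin (n + 1))) : restrictLast (fixLast w) = w := by
  rw [restrictLast, fixLast, ← permCongr_symm, apply_symm_apply, removeNone_optionCongr]

lemma fixLast_restrictLast {w : Perm (Fin (n + 2))} (h : w (Fin.last (n + 1)) = Fin.last (n + 1)) :
    fixLast (restrictLast w) = w := by
  rw [fixLast, restrictLast, optionCongr_removeNone_of_apply_none (by simp [h]),
    ← permCongr_symm, symm_apply_apply]

lemma fixLast_mul_self_eq_one_iff {w : Perm (Fin (n + 1))} :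
    fixLast w * fixLast w = 1 ↔ w * w = 1 := by
  simp only [perm_mul_self_eq_one_iff, Fin.forall_fin_succ', fixLast_apply_last,
    fixLast_apply_castSucc, Fin.castSucc_inj, and_true]

def splitEquiv (j : Fin (n + 1)) : Fin (n + 2) ≃ Option (Option (Fin n)) :=
  finSuccEquivLast.trans (optionCongr (finSuccEquiv' j))

@[simp] lemma splitEquiv_last (j : Fin (n + 1)) : splitEquiv j (Fin.last (n + 1)) = none := by
  simp [splitEquiv]

@[simp] lemma splitEquiv_castSucc_self (j : Fin (n + 1)) : splitEquiv j j.castSucc = some none := by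
  simp [splitEquiv, finSuccEquiv'_at]

@[simp] lemma splitEquiv_castSucc_succAbove (j : Fin (n + 1)) (i : Fin n) :
    splitEquiv j (j.succAbove i).castSucc = some (some i) := by
  simp [splitEquiv, finSuccEquiv'_succAbove]

@[simp] lemma splitEquiv_symm_none (j : Fin (n + 1)) :
    (splitEquiv j).symm none = Fin.last (n + 1) := by
  simp [splitEquiv, ← optionCongr_symm, optionCongr_apply]

@[simp] lemma splitEquiv_symm_some_none (j : Fin (n + 1)) :
    (splitEquiv j).symm (some none) = j.castSucc := by
  simp [splitEquiv, finSuccEquiv'_symm_none, ← optionCongr_symm, optionCongr_apply]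

@[simp] lemma splitEquiv_symm_some_some (j : Fin (n + 1)) (i : Fin n) :
    (splitEquiv j).symm (some (some i)) = (j.succAbove i).castSucc := by
  simp [splitEquiv, finSuccEquiv'_symm_some, ← optionCongr_symm, optionCongr_apply]

def pairLast (j : Fin (n + 1)) (v : Perm (Fin n)) : Perm (Fin (n + 2)) :=
  (splitEquiv j).symm.permCongr (swap none (some none) * optionCongr (optionCongr v))

@[simp] lemma pairLast_apply_last (j : Fin (n + 1)) (v : Perm (Fin n)) :
    pairLast j v (Fin.last (n + 1)) = j.castSucc := by
  simp [pairLast, Perm.mul_apply]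

@[simp] lemma pairLast_apply_castSucc_self (j : Fin (n + 1)) (v : Perm (Fin n)) :
    pairLast j v j.castSucc = Fin.last (n + 1) := by
  simp [pairLast, Perm.mul_apply]

@[simp] lemma pairLast_apply_castSucc_succAbove (j : Fin (n + 1)) (v : Perm (Fin n)) (i : Fin n) :
    pairLast j v (j.succAbove i).castSucc = (j.succAbove (v i)).castSucc := by
  simp [pairLast, Perm.mul_apply, swap_apply_of_ne_of_ne]

lemma pairLast_mul_self_eq_one_iff {j : Fin (n + 1)} {v : Perm (Fin n)} :
    pairLast j v * pairLast j v = 1 ↔ v * v = 1 := by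
  rw [perm_mul_self_eq_one_iff, perm_mul_self_eq_one_iff, Fin.forall_fin_succ',
    Fin.forall_iff_succAbove j]
  simp only [pairLast_apply_last, pairLast_apply_castSucc_self, pairLast_apply_castSucc_succAbove,
    Fin.castSucc_inj, Fin.succAbove_right_inj, and_true, true_and]

-- `0` is a junk value, taken only when `w` fixes the last point.
noncomputable def lastPartner (w : Perm (Fin (n + 2))) : Fin (n + 1) :=
  (finSuccEquivLast (w (Fin.last (n + 1)))).getD 0

noncomputable def restrictPair (w : Perm (Fin (n + 2))) : Perm (Fin n) :=
  removeNone (removeNone (swap none (some none) * (splitEquiv (lastPartner w)).permCongr w))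

@[simp] lemma lastPartner_pairLast (j : Fin (n + 1)) (v : Perm (Fin n)) :
    lastPartner (pairLast j v) = j := by
  simp [lastPartner]

lemma restrictPair_pairLast (j : Fin (n + 1)) (v : Perm (Fin n)) :
    restrictPair (pairLast j v) = v := by
  rw [restrictPair, lastPartner_pairLast, pairLast, ← permCongr_symm, apply_symm_apply,
    ← mul_assoc, swap_mul_self, one_mul, removeNone_optionCongr, removeNone_optionCongr]

lemma pairLast_restrictPair {w : Perm (Fin (n + 2))} (hw : w * w = 1)
    (h : w (Fin.last (n + 1)) ≠ Fin.last (n + 1)) :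
    pairLast (lastPartner w) (restrictPair w) = w := by
  obtain ⟨j, hj⟩ := Fin.exists_castSucc_eq.2 h
  have hpartner : lastPartner w = j := by simp [lastPartner, ← hj]
  have hwj : w j.castSucc = Fin.last (n + 1) := by rw [hj, perm_mul_self_eq_one_iff.1 hw]
  rw [pairLast, restrictPair, hpartner, optionCongr_optionCongr_removeNone_removeNone,
    ← mul_assoc, swap_mul_self, one_mul, ← permCongr_symm, symm_apply_apply]
  · simp [Perm.mul_apply, ← hj]
  · simp [Perm.mul_apply, hwj]

lemma sum_fin_add_two_eq (j : Fin (n + 1)) (g : Fin (n + 2) → ℕ) :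
    ∑ x, g x = g (Fin.last (n + 1)) + g j.castSucc + ∑ i, g (j.succAbove i).castSucc := by
  rw [Fin.sum_univ_castSucc, Fin.sum_univ_succAbove _ j]
  ring

lemma card_lt_succAbove (j : Fin (n + 1)) : #{i : Fin n | j < j.succAbove i} = n - j := by
  have hcompl := card_filter_add_card_filter_not (s := univ) fun i : Fin n => (i : ℕ) < j
  simp only [Fin.card_filter_val_lt, card_univ, Fintype.card_fin, not_lt] at hcompl
  simp only [Fin.lt_succAbove_iff_le_castSucc, Fin.le_def, Fin.val_castSucc]
  omega

lemma fixCount_fixLast (w : Perm (Fin (n + 1))) : fixCount (fixLast w) = fixCount w + 1 := by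
  rw [fixCount_eq_sum, fixCount_eq_sum, Fin.sum_univ_castSucc]
  simp [Fin.castSucc_inj]

lemma fixCount_pairLast (j : Fin (n + 1)) (v : Perm (Fin n)) :
    fixCount (pairLast j v) = fixCount v := by
  rw [fixCount_eq_sum, fixCount_eq_sum, sum_fin_add_two_eq j]
  simp [(Fin.castSucc_lt_last j).ne, (Fin.castSucc_lt_last j).ne', Fin.castSucc_inj]

lemma neatCount_fixLast (w : Perm (Fin (n + 1))) : neatCount (fixLast w) = neatCount w := by
  rw [neatCount_eq_sum, neatCount_eq_sum]
  simp only [Fin.sum_univ_castSucc (n := n + 1)]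
  simp [Fin.castSucc_lt_last, fun x : Fin (n + 2) => (Fin.le_last x).not_gt]

lemma neatCount_pairLast (j : Fin (n + 1)) (v : Perm (Fin n)) :
    neatCount (pairLast j v) = neatCount v + (n - j) := by
  rw [neatCount_eq_sum, neatCount_eq_sum]
  simp only [sum_fin_add_two_eq j]
  simp [Fin.castSucc_lt_last, Fin.succAbove_lt_succAbove_iff, ← card_lt_succAbove j,
    fun x : Fin (n + 2) => (Fin.le_last x).not_gt]
  rw [sum_add_distrib, add_comm, ← card_filter]

lemma weight_fixLast (p q : ℂ) (w : Perm (Fin (n + 1))) :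
    weight p q (fixLast w) = (1 - p) * weight p q w := by
  have hsub : n + 2 - (fixCount w + 1) = n + 1 - fixCount w := by omega
  rw [weight, weight, fixCount_fixLast, neatCount_fixLast, hsub, pow_succ]
  ring

lemma weight_pairLast (p q : ℂ) (j : Fin (n + 1)) (v : Perm (Fin n)) :
    weight p q (pairLast j v) = p * (1 - q) * q ^ (n - j) * weight p q v := by
  have hdiv : (n + 2 - fixCount v) / 2 = (n - fixCount v) / 2 + 1 := by
    have := fixCount_le v
    omega
  rw [weight, weight, fixCount_pairLast, neatCount_pairLast, hdiv, pow_succ, pow_add]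
  ring

lemma sum_weight_fixing_last (p q : ℂ) :
    ∑ w ∈ (involutions (n + 2)).filter (fun w => w (Fin.last (n + 1)) = Fin.last (n + 1)),
      weight p q w = (1 - p) * f (n + 1) p q := by
  rw [f_eq_sum_weight, mul_sum]
  symm
  refine sum_nbij' fixLast restrictLast ?_ ?_ (fun w _ => restrictLast_fixLast w) ?_
    (fun w _ => (weight_fixLast p q w).symm) <;> simp only [mem_filter, mem_involutions]
  · exact fun w hw => ⟨fixLast_mul_self_eq_one_iff.2 hw, fixLast_apply_last w⟩
  · rintro w ⟨hw, hlast⟩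
    rwa [← fixLast_mul_self_eq_one_iff, fixLast_restrictLast hlast]
  · exact fun w ⟨_, hlast⟩ => fixLast_restrictLast hlast

lemma sum_weight_moving_last (p q : ℂ) :
    ∑ w ∈ (involutions (n + 2)).filter (fun w => w (Fin.last (n + 1)) ≠ Fin.last (n + 1)),
      weight p q w = p * (1 - q ^ (n + 1)) * f n p q := by
  calc _ = ∑ jv ∈ univ ×ˢ involutions n, weight p q (pairLast jv.1 jv.2) := by
        symm
        refine sum_nbij' (fun jv => pairLast jv.1 jv.2) (fun w => (lastPartner w, restrictPair w))
          ?_ ?_ (fun jv _ => Prod.ext (lastPartner_pairLast ..) (restrictPair_pairLast ..)) ?_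
          (fun _ _ => rfl) <;> simp only [mem_filter, mem_involutions, mem_product, mem_univ,
            true_and]
        · exact fun jv hv => ⟨pairLast_mul_self_eq_one_iff.2 hv,
            by simp [(Fin.castSucc_lt_last jv.1).ne]⟩
        · rintro w ⟨hw, hlast⟩
          rwa [← pairLast_mul_self_eq_one_iff, pairLast_restrictPair hw hlast]
        · exact fun w ⟨hw, hlast⟩ => pairLast_restrictPair hw hlast
    _ = ∑ j : Fin (n + 1), p * (1 - q) * q ^ (n - j) * f n p q := by
        simp only [sum_product, weight_pairLast, ← mul_sum, ← f_eq_sum_weight]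
    _ = p * ((1 - q) * ∑ j : Fin (n + 1), q ^ (n - j)) * f n p q := by
        simp only [mul_sum, sum_mul]
        exact sum_congr rfl fun j _ => by ring
    _ = p * (1 - q ^ (n + 1)) * f n p q := by rw [one_sub_mul_sum_pow_sub]

end

lemma f_add_two (n : ℕ) (p q : ℂ) :
    f (n + 2) p q = p * (1 - q ^ (n + 1)) * f n p q + (1 - p) * f (n + 1) p q := by
  rw [f_eq_sum_weight,
    ← sum_filter_add_sum_filter_not _ fun w => w (Fin.last (n + 1)) = Fin.last (n + 1),
    sum_weight_fixing_last, sum_weight_moving_last, add_comm]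

/-- the recurrence for `f_k`. -/
theorem f_recurrence (p q : ℂ) :
    f 1 p q = 1 - p ∧ f 2 p q = 1 - (1 + q) * p + p ^ 2 ∧
    ∀ k : ℕ, 3 ≤ k →
      f k p q = p * (1 - q ^ (k - 1)) * f (k - 2) p q + (1 - p) * f (k - 1) p q := by
  refine ⟨f_one p q, ?_, fun k hk => ?_⟩
  · rw [f_add_two 0, f_zero, f_one]
    ring
  · obtain ⟨n, rfl⟩ : ∃ n, k = n + 2 := ⟨k - 2, by omega⟩
    exact f_add_two n p q

end PaperF
end

section
/- Let k and i be integers with k ≥ i ≥ 0. Then Σ_{j=0}^{i} (−1)^j C(k−2j, i−j) C(k−j, j) = 1, where the binomial coefficient C(n,t) is taken to be 0 whenever t > n ≥ 0 or n ≥ 0 > t (equivalently, each summand equals (−1)^j times the trinomial coefficient (k−j)! / (j! (i−j)! (k−i−j)!) when j, i−j, k−i−j ≥ 0, and 0 otherwise). -/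
namespace PaperF

/-- The binomial coefficient `C(n, t)` for integer arguments, with the convention that
`C(n, t) = 0` whenever `t < 0` or `t > n` (in particular whenever `n ≥ 0 > t` or
`t > n ≥ 0`). -/
def C (n t : ℤ) : ℤ := if 0 ≤ t ∧ t ≤ n then (Nat.choose n.toNat t.toNat : ℤ) else 0

lemma C_of_neg_right {n t : ℤ} (ht : t < 0) : C n t = 0 := by
  simp only [C, if_neg (show ¬(0 ≤ t ∧ t ≤ n) by omega)]

lemma C_of_lt {n t : ℤ} (h : n < t) : C n t = 0 := by
  simp only [C, if_neg (show ¬(0 ≤ t ∧ t ≤ n) by omega)]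

lemma C_zero {n : ℤ} (h : 0 ≤ n) : C n 0 = 1 := by
  simp only [C, if_pos (show (0:ℤ) ≤ 0 ∧ (0:ℤ) ≤ n from ⟨le_refl _, h⟩)]
  simp

lemma C_self {n : ℤ} (h : 0 ≤ n) : C n n = 1 := by
  simp only [C, if_pos (show 0 ≤ n ∧ n ≤ n from ⟨h, le_refl _⟩)]
  simp [Nat.choose_self]

lemma C_pascal (n t : ℤ) (h : ¬(n = 0 ∧ t = 0)) :
    C n t = C (n - 1) t + C (n - 1) (t - 1) := by
  unfold C
  split_ifs with h1 h2 h3 h2 h3 <;> try omega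
  · have hn : n.toNat = (n - 1).toNat + 1 := by omega
    have ht : t.toNat = (t - 1).toNat + 1 := by omega
    rw [hn, ht, Nat.choose_succ_succ]
    push_cast
    ring
  · have ht : t.toNat = 0 := by omega
    simp [ht]
  · have ht : t.toNat = n.toNat := by omega
    have ht2 : (t - 1).toNat = (n - 1).toNat := by omega
    simp [ht, ht2, Nat.choose_self]

/-- term of the sum -/
def tt (k i j : ℕ) : ℤ :=
  (-1 : ℤ) ^ j * C ((k : ℤ) - 2 * (j : ℤ)) ((i : ℤ) - (j : ℤ)) * C ((k : ℤ) - (j : ℤ)) (j : ℤ)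

lemma tt_zero_fst {k i j : ℕ} (h : (k : ℤ) - 2 * (j : ℤ) < (i : ℤ) - (j : ℤ)) : tt k i j = 0 := by
  unfold tt
  exact mul_eq_zero_of_left (mul_eq_zero_of_right _ (C_of_lt h)) _

lemma tt_zero_snd {k i j : ℕ} (h : (i : ℤ) - (j : ℤ) < 0) : tt k i j = 0 := by
  unfold tt
  exact mul_eq_zero_of_left (mul_eq_zero_of_right _ (C_of_neg_right h)) _

lemma tt_zero_third {k i j : ℕ} (h : (k : ℤ) - (j : ℤ) < (j : ℤ)) : tt k i j = 0 := by
  unfold tt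
  exact mul_eq_zero_of_right _ (C_of_lt h)

/-- the Pascal-style identity at the level of products, in ℤ. -/
lemma keyZ (K I J : ℤ) (hex : ¬(K + 2 - 2 * J = 0 ∧ I + 1 - J = 0)) (hJ : 1 ≤ J) :
    C (K + 2 - 2 * J) (I + 1 - J) * C (K + 2 - J) J
      = C (K + 1 - 2 * J) (I + 1 - J) * C (K + 1 - J) J
        + C (K + 1 - 2 * J) (I - J) * C (K + 1 - J) J
        + C (K + 2 - 2 * J) (I + 1 - J) * C (K + 1 - J) (J - 1) := by
  have h1 := C_pascal (K + 2 - 2 * J) (I + 1 - J) hex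
  have h2 := C_pascal (K + 2 - J) J (by omega)
  have e1 : K + 2 - 2 * J - 1 = K + 1 - 2 * J := by ring
  have e2 : I + 1 - J - 1 = I - J := by ring
  have e3 : K + 2 - J - 1 = K + 1 - J := by ring
  rw [e1, e2] at h1
  rw [e3] at h2
  rw [h1, h2]
  ring

/-- the termwise recurrence -/
lemma key (m n j : ℕ) :
    tt (m + 2) (n + 1) j
      = tt (m + 1) (n + 1) j + tt (m + 1) n j
        + (if j = 0 then 0 else -tt m n (j - 1)) := by
  rcases Nat.eq_zero_or_pos j with hj0 | hj0
  · subst hj0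
    simp only [if_pos rfl, tt, Nat.cast_zero, mul_zero, sub_zero, pow_zero, one_mul, add_zero]
    have c1 : C ((m : ℤ) + 2) 0 = 1 := C_zero (by positivity)
    have c2 : C ((m : ℤ) + 1) 0 = 1 := C_zero (by positivity)
    push_cast
    rw [c1, c2]
    have h := C_pascal ((m : ℤ) + 2) ((n : ℤ) + 1) (by
      rintro ⟨h1, -⟩
      omega)
    have e1 : (m : ℤ) + 2 - 1 = (m : ℤ) + 1 := by ring
    have e2 : (n : ℤ) + 1 - 1 = (n : ℤ) := by ring
    rw [e1, e2] at h
    rw [mul_one, mul_one, mul_one, h]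
    ring
  · by_cases hex : m + 2 = 2 * j ∧ j = n + 1
    · obtain ⟨h1, h2⟩ := hex
      subst h2
      have hm : m = 2 * n := by omega
      subst hm
      rw [if_neg (Nat.succ_ne_zero n), Nat.add_sub_cancel]
      have T2 : tt (2 * n + 1) (n + 1) (n + 1) = 0 := by
        apply tt_zero_fst
        push_cast
        omega
      have T3 : tt (2 * n + 1) n (n + 1) = 0 := by
        apply tt_zero_snd
        push_cast
        omega
      have T1 : tt (2 * n + 2) (n + 1) (n + 1) = (-1 : ℤ) ^ (n + 1) := by
        unfold tt
        rw [show ((2 * n + 2 : ℕ) : ℤ) - 2 * ((n + 1 : ℕ) : ℤ) = 0 by push_cast; ring,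
          show ((n + 1 : ℕ) : ℤ) - ((n + 1 : ℕ) : ℤ) = 0 by ring,
          show ((2 * n + 2 : ℕ) : ℤ) - ((n + 1 : ℕ) : ℤ) = ((n + 1 : ℕ) : ℤ) by push_cast; ring]
        rw [C_zero le_rfl, C_self (Int.natCast_nonneg _)]
        ring
      have T4 : tt (2 * n) n n = (-1 : ℤ) ^ n := by
        unfold tt
        rw [show ((2 * n : ℕ) : ℤ) - 2 * ((n : ℕ) : ℤ) = 0 by push_cast; ring,
          show ((n : ℕ) : ℤ) - ((n : ℕ) : ℤ) = 0 by ring,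
          show ((2 * n : ℕ) : ℤ) - ((n : ℕ) : ℤ) = ((n : ℕ) : ℤ) by push_cast; ring]
        rw [C_zero le_rfl, C_self (Int.natCast_nonneg _)]
        ring
      rw [T1, T2, T3, T4, pow_succ]
      ring
    · have hj1 : (1 : ℤ) ≤ (j : ℤ) := by exact_mod_cast hj0
      have hexZ : ¬((m : ℤ) + 2 - 2 * (j : ℤ) = 0 ∧ (n : ℤ) + 1 - (j : ℤ) = 0) := by
        rintro ⟨hA, hB⟩
        exact hex ⟨by omega, by omega⟩
      have hkey := keyZ (m : ℤ) (n : ℤ) (j : ℤ) hexZ hj1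
      simp only [tt, if_neg (Nat.pos_iff_ne_zero.mp hj0)]
      have hc : ((j - 1 : ℕ) : ℤ) = (j : ℤ) - 1 := by
        push_cast [hj0]
        ring
      have hp : (-1 : ℤ) ^ (j - 1) * (-1) = (-1 : ℤ) ^ j := by
        rw [← pow_succ]
        congr 1
        omega
      push_cast [hc]
      have b1 : (m : ℤ) - 2 * ((j : ℤ) - 1) = (m : ℤ) + 2 - 2 * (j : ℤ) := by ring
      have b2 : (n : ℤ) - ((j : ℤ) - 1) = (n : ℤ) + 1 - (j : ℤ) := by ring
      have b3 : (m : ℤ) - ((j : ℤ) - 1) = (m : ℤ) + 1 - (j : ℤ) := by ring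
      rw [b1, b2, b3]
      calc (-1 : ℤ) ^ j * C ((m : ℤ) + 2 - 2 * (j : ℤ)) ((n : ℤ) + 1 - (j : ℤ)) * C ((m : ℤ) + 2 - (j : ℤ)) (j : ℤ)
          = (-1 : ℤ) ^ j * (C ((m : ℤ) + 2 - 2 * (j : ℤ)) ((n : ℤ) + 1 - (j : ℤ)) * C ((m : ℤ) + 2 - (j : ℤ)) (j : ℤ)) := by ring
        _ = _ := by rw [hkey]; rw [← hp]; ring

lemma sumT (k : ℕ) : ∀ i : ℕ, (∑ j ∈ Finset.range (i + 1), tt k i j) = if i ≤ k then 1 else 0 := by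
  induction k using Nat.strong_induction_on with
  | _ k ih =>
    match k, ih with
    | 0, _ =>
      intro i
      rw [Finset.sum_eq_single 0]
      · simp only [tt, Nat.cast_zero, mul_zero, sub_zero, pow_zero, one_mul]
        rw [C_zero le_rfl, mul_one]
        match i with
        | 0 => rw [Nat.cast_zero, C_zero le_rfl, if_pos le_rfl]
        | (s + 1) =>
          rw [if_neg (by omega), C_of_lt (by push_cast; omega)]
      · intro j _ hj
        have := Nat.pos_of_ne_zero hj
        exact tt_zero_third (by push_cast; omega)
      · intro h
        exact absurd (Finset.mem_range.mpr (by omega)) h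
    | 1, _ =>
      intro i
      rw [Finset.sum_eq_single 0]
      · simp only [tt, Nat.cast_zero, mul_zero, sub_zero, pow_zero, one_mul, Nat.cast_one]
        rw [C_zero (by norm_num), mul_one]
        match i with
        | 0 => rw [Nat.cast_zero, C_zero (by norm_num), if_pos (by omega)]
        | 1 => rw [Nat.cast_one, C_self (by norm_num), if_pos le_rfl]
        | (s + 2) =>
          rw [if_neg (by omega), C_of_lt (by push_cast; omega)]
      · intro j _ hj
        have := Nat.pos_of_ne_zero hj
        exact tt_zero_third (by push_cast; omega)
      · intro h
        exact absurd (Finset.mem_range.mpr (by omega)) h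
    | (m + 2), ih =>
      intro i
      match i with
      | 0 =>
        rw [Finset.sum_range_one]
        simp only [tt, Nat.cast_zero, mul_zero, sub_zero, pow_zero, one_mul]
        rw [C_zero (Int.natCast_nonneg _)]
        simp
      | (n + 1) =>
        have hsum : (∑ j ∈ Finset.range (n + 2), tt (m + 2) (n + 1) j)
            = (∑ j ∈ Finset.range (n + 2), tt (m + 1) (n + 1) j)
              + (∑ j ∈ Finset.range (n + 2), tt (m + 1) n j)
              + (∑ j ∈ Finset.range (n + 2), if j = 0 then 0 else -tt m n (j - 1)) := by
          rw [← Finset.sum_add_distrib, ← Finset.sum_add_distrib]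
          exact Finset.sum_congr rfl fun j _ => key m n j
        rw [hsum]
        have h2 : (∑ j ∈ Finset.range (n + 2), tt (m + 1) n j)
            = ∑ j ∈ Finset.range (n + 1), tt (m + 1) n j := by
          rw [Finset.sum_range_succ]
          rw [tt_zero_snd (by push_cast; omega), add_zero]
        have h3 : (∑ j ∈ Finset.range (n + 2), if j = 0 then 0 else -tt m n (j - 1))
            = -∑ j ∈ Finset.range (n + 1), tt m n j := by
          rw [Finset.sum_range_succ']
          simp [Finset.sum_neg_distrib]
        rw [h2, h3, ih (m + 1) (by omega) (n + 1), ih (m + 1) (by omega) n, ih m (by omega) n]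
        split_ifs <;> omega

/-- the alternating sum of products of binomial coefficients equals 1. -/
theorem binom_sum (k i : ℕ) (hik : i ≤ k) :
    ∑ j ∈ Finset.range (i + 1),
      (-1 : ℤ) ^ j * C ((k : ℤ) - 2 * (j : ℤ)) ((i : ℤ) - (j : ℤ)) * C ((k : ℤ) - (j : ℤ)) (j : ℤ)
      = 1 := by
  have := sumT k i
  rw [if_pos hik] at this
  exact this

end PaperF
end

section
/- For every k ≥ 1, q ∈ ℂ, and p ∈ ℂ with p ≠ 0, one has (−p)^k f_k(p^{−1}, q) = f_k(p, q). -/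
namespace PaperF

open scoped Classical

/-- A finset invariant under a fixed-point-free involution has even cardinality. -/
lemma even_card_aux {α : Type*} [DecidableEq α] (w : α → α) (hw : ∀ i, w (w i) = i) :
    ∀ s : Finset α, (∀ i ∈ s, w i ∈ s ∧ w i ≠ i) → Even s.card := by
  intro s
  induction s using Finset.strongInduction with
  | _ s ih =>
    intro hs
    rcases s.eq_empty_or_nonempty with rfl | ⟨i, hi⟩
    · simp
    · obtain ⟨hwi, hne⟩ := hs i hi
      have hsub : ({i, w i} : Finset α) ⊆ s := by
        intro j hj
        simp only [Finset.mem_insert, Finset.mem_singleton] at hj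
        rcases hj with rfl | rfl <;> assumption
      have hpair : ({i, w i} : Finset α).card = 2 := by
        rw [Finset.card_insert_of_notMem (by simpa using fun h => hne h.symm)]
        simp
      set t := s \ {i, w i} with ht
      have htss : t ⊂ s :=
        Finset.sdiff_ssubset hsub (by simp)
      have htcard : t.card = s.card - 2 := by
        rw [ht, Finset.card_sdiff_of_subset hsub, hpair]
      have hge : 2 ≤ s.card := hpair ▸ Finset.card_le_card hsub
      have hteven : Even t.card := by
        refine ih t htss ?_
        intro j hj
        rw [ht, Finset.mem_sdiff] at hj
        obtain ⟨hjs, hjn⟩ := hj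
        simp only [Finset.mem_insert, Finset.mem_singleton, not_or] at hjn
        obtain ⟨hji, hjwi⟩ := hjn
        obtain ⟨hwjs, hwjne⟩ := hs j hjs
        refine ⟨?_, hwjne⟩
        rw [ht, Finset.mem_sdiff]
        refine ⟨hwjs, ?_⟩
        simp only [Finset.mem_insert, Finset.mem_singleton, not_or]
        constructor
        · intro h; exact hjwi (by rw [← h, hw])
        · intro h
          exact hji (by have := congrArg w h; rwa [hw, hw] at this)
      obtain ⟨m, hm⟩ := hteven
      exact ⟨m + 1, by omega⟩

lemma even_sub_fixCount {k : ℕ} (w : Equiv.Perm (Fin k)) (hw : w * w = 1) :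
    Even (k - fixCount w) := by
  classical
  have hsum : (Finset.univ.filter fun i => w i = i).card
      + (Finset.univ.filter fun i => ¬ w i = i).card = k := by
    rw [Finset.card_filter_add_card_filter_not]
    simp
  have hcard : (Finset.univ.filter fun i => ¬ w i = i).card = k - fixCount w := by
    unfold fixCount; omega
  rw [← hcard]
  refine even_card_aux w (fun i => ?_) _ (fun i hi => ?_)
  · have := congrFun (congrArg (fun u : Equiv.Perm (Fin k) => (u : Fin k → Fin k)) hw) i
    simpa using this
  · simp only [Finset.mem_filter, Finset.mem_univ, true_and] at hi ⊢
    constructor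
    · intro h
      have := congrFun (congrArg (fun u : Equiv.Perm (Fin k) => (u : Fin k → Fin k)) hw) i
      simp only [Equiv.Perm.coe_mul, Function.comp_apply, Equiv.Perm.coe_one, id_eq] at this
      rw [h] at this
      exact hi this
    · intro h; exact hi h

/-- the functional equation `(-p)^k f_k(p⁻¹, q) = f_k(p, q)`. -/
theorem f_functional_equation (k : ℕ) (hk : 1 ≤ k) (q p : ℂ) (hp : p ≠ 0) :
    (-p) ^ k * f k p⁻¹ q = f k p q := by
  classical
  unfold f
  rw [Finset.mul_sum]
  refine Finset.sum_congr rfl fun w hw => ?_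
  simp only [Finset.mem_filter, Finset.mem_univ, true_and] at hw
  have ha : fixCount w ≤ k := by
    have := Finset.card_filter_le (Finset.univ : Finset (Fin k)) (fun i => w i = i)
    simpa [fixCount] using this
  obtain ⟨n, hn⟩ := even_sub_fixCount w hw
  have hdiv : (k - fixCount w) / 2 = n := by omega
  have hk' : k = fixCount w + 2 * n := by omega
  rw [hdiv]
  have epow : (-p) ^ k = (-p) ^ fixCount w * ((-p) ^ 2) ^ n := by
    rw [← pow_mul, ← pow_add, ← hk']
  rw [epow]
  have e1 : (-p) * (1 - p⁻¹) = 1 - p := by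
    field_simp
    ring
  have e2 : (-p) ^ 2 * (p⁻¹ * (1 - q)) = p * (1 - q) := by
    field_simp
  have e3 : ((-p) ^ 2) ^ n * (p⁻¹ * (1 - q)) ^ n = (p * (1 - q)) ^ n := by
    rw [← mul_pow, e2]
  have e4 : (-p) ^ fixCount w * (1 - p⁻¹) ^ fixCount w = (1 - p) ^ fixCount w := by
    rw [← mul_pow, e1]
  calc (-p) ^ fixCount w * ((-p) ^ 2) ^ n *
        ((p⁻¹ * (1 - q)) ^ n * (1 - p⁻¹) ^ fixCount w * q ^ neatCount w)
      = ((-p) ^ 2) ^ n * (p⁻¹ * (1 - q)) ^ n *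
          ((-p) ^ fixCount w * (1 - p⁻¹) ^ fixCount w) * q ^ neatCount w := by ring
    _ = (p * (1 - q)) ^ n * (1 - p) ^ fixCount w * q ^ neatCount w := by
        rw [e3, e4]

end PaperF
end
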